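/- In a two-player quantum game with Hermitian payoff H on ℂ^{n_A n_B}, the robust security strategy set of the maximizing victim, Φ_r(H') = argmax_{ψ_B} min_{ψ_A, D ∈ 𝒟} ⟨ψ_A ⊗ ψ_B, (H' − D)(ψ_A ⊗ ψ_B)⟩, coincides with the naive security strategy set Φ(H') = argmax_{ψ_B} min_{ψ_A} ⟨ψ_A ⊗ ψ_B, H'(ψ_A ⊗ ψ_B)⟩, where 𝒟 is the set of Hermitian matrices with induced 1-norm at most Δ. That is, awareness of bounded deception does not change the victim's optimal strategy. -/

import Mathlib

open Matrix BigOperators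
open scoped Kronecker ComplexOrder

noncomputable def norm1v {m : Type*} [Fintype m] (x : m → ℂ) : ℝ := ∑ i, ‖x i‖

/-- Operator norm induced by the vector 1-norm. -/
noncomputable def opNorm1 {m : Type*} [Fintype m] (D : Matrix m m ℂ) : ℝ :=
  sSup {r | ∃ x : m → ℂ, norm1v x = 1 ∧ r = norm1v (D.mulVec x)}

/-- Real quadratic form ⟨φ, M φ⟩ (real part). -/
noncomputable def qf {m : Type*} [Fintype m] (M : Matrix m m ℂ) (φ : m → ℂ) : ℝ :=
  (star φ ⬝ᵥ M.mulVec φ).re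

/-- Kronecker (tensor) product of vectors. -/
def kron {nA nB : ℕ} (a : Fin nA → ℂ) (b : Fin nB → ℂ) : Fin nA × Fin nB → ℂ :=
  fun p => a p.1 * b p.2

/-- Partial trace over the first tensor factor. -/
noncomputable def trA {nA nB : ℕ} (M : Matrix (Fin nA × Fin nB) (Fin nA × Fin nB) ℂ) :
    Matrix (Fin nB) (Fin nB) ℂ := Matrix.of fun j j' => ∑ i, M (i, j) (i, j')

/-- Partial trace over the second tensor factor. -/
noncomputable def trB {nA nB : ℕ} (M : Matrix (Fin nA × Fin nB) (Fin nA × Fin nB) ℂ) :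
    Matrix (Fin nA) (Fin nA) ℂ := Matrix.of fun i i' => ∑ j, M (i, j) (i', j)

lemma qf_sub {m : Type*} [Fintype m] (M N : Matrix m m ℂ) (φ : m → ℂ) :
    qf (M - N) φ = qf M φ - qf N φ := by
  simp [qf, sub_mulVec, dotProduct_sub, Complex.sub_re]

lemma unit_sum_sq {m : Type*} [Fintype m] {φ : m → ℂ} (h : star φ ⬝ᵥ φ = 1) :
    ∑ i, ‖φ i‖ ^ 2 = 1 := by
  have h2 := congrArg Complex.re h
  simp only [dotProduct, Pi.star_apply, Complex.re_sum, Complex.one_re] at h2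
  rw [← h2]
  congr 1; ext i
  rw [Complex.sq_norm]
  simp [Complex.mul_re, Complex.normSq_apply, RCLike.star_def, Complex.conj_re, Complex.conj_im]
  try ring

lemma qf_smul_one {m : Type*} [Fintype m] [DecidableEq m] (Δ : ℝ) {φ : m → ℂ}
    (h : star φ ⬝ᵥ φ = 1) : qf ((Δ:ℂ) • (1 : Matrix m m ℂ)) φ = Δ := by
  simp [qf, Matrix.smul_mulVec, Matrix.one_mulVec, dotProduct_smul, h]

lemma herm_smul_one {m : Type*} [Fintype m] [DecidableEq m] (Δ : ℝ) :
    ((Δ:ℂ) • (1 : Matrix m m ℂ)).IsHermitian := by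
  unfold Matrix.IsHermitian
  simp [Matrix.conjTranspose_smul, Complex.star_def, Complex.conj_ofReal]

lemma opNorm1_smul_one {m : Type*} [Fintype m] [DecidableEq m] {Δ : ℝ} (hΔ : 0 ≤ Δ) :
    opNorm1 ((Δ:ℂ) • (1 : Matrix m m ℂ)) ≤ Δ := by
  apply Real.sSup_le _ hΔ
  rintro r ⟨x, hx, rfl⟩
  have : norm1v (((Δ:ℂ) • (1 : Matrix m m ℂ)).mulVec x) = Δ * norm1v x := by
    simp [norm1v, Matrix.smul_mulVec, Matrix.one_mulVec, Finset.mul_sum,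
      norm_mul, Complex.norm_real, Real.norm_eq_abs, abs_of_nonneg hΔ]
  rw [this, hx, mul_one]

-- every element of the opNorm1 set is ≤ total sum of abs entries
lemma opNorm1_bddAbove {m : Type*} [Fintype m] (D : Matrix m m ℂ) :
    BddAbove {r | ∃ x : m → ℂ, norm1v x = 1 ∧ r = norm1v (D.mulVec x)} := by
  refine ⟨∑ i, ∑ j, ‖D i j‖, ?_⟩
  rintro r ⟨x, hx, rfl⟩
  have hxj : ∀ j, ‖x j‖ ≤ 1 := by
    intro j
    rw [← hx]
    exact Finset.single_le_sum (fun i _ => (norm_nonneg (x i))) (Finset.mem_univ j)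
  calc norm1v (D.mulVec x) = ∑ i, ‖∑ j, D i j * x j‖ := by
        simp [norm1v, Matrix.mulVec, dotProduct]
    _ ≤ ∑ i, ∑ j, ‖D i j‖ * ‖x j‖ := by
        apply Finset.sum_le_sum; intro i _
        calc ‖∑ j, D i j * x j‖ ≤ ∑ j, ‖D i j * x j‖ :=
              norm_sum_le _ _
          _ = ∑ j, ‖D i j‖ * ‖x j‖ := by simp [norm_mul]
    _ ≤ ∑ i, ∑ j, ‖D i j‖ := by
        apply Finset.sum_le_sum; intro i _
        apply Finset.sum_le_sum; intro j _
        calc ‖D i j‖ * ‖x j‖ ≤ ‖D i j‖ * 1 :=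
              mul_le_mul_of_nonneg_left (hxj j) (norm_nonneg _)
          _ = ‖D i j‖ := mul_one _

lemma col_sum_le {m : Type*} [Fintype m] [DecidableEq m] {D : Matrix m m ℂ} {Δ : ℝ}
    (hN : opNorm1 D ≤ Δ) (j : m) : ∑ i, ‖D i j‖ ≤ Δ := by
  refine le_trans (le_csSup (opNorm1_bddAbove D) ?_) hN
  refine ⟨Pi.single j 1, ?_, ?_⟩
  · simp [norm1v, Pi.single_apply, apply_ite]
  · simp [norm1v, Matrix.mulVec_single]

lemma qf_le_of_opNorm1 {m : Type*} [Fintype m] [DecidableEq m] {D : Matrix m m ℂ} {Δ : ℝ}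
    (hD : D.IsHermitian) (hN : opNorm1 D ≤ Δ) {φ : m → ℂ} (hφ : star φ ⬝ᵥ φ = 1) :
    qf D φ ≤ Δ := by
  have habs : ∀ i j, ‖D i j‖ = ‖D j i‖ := by
    intro i j
    conv_lhs => rw [← hD]
    simp [Matrix.conjTranspose_apply]
  have hsq : ∑ i, ‖φ i‖ ^ 2 = 1 := by
    have h2 := congrArg Complex.re hφ
    simp only [dotProduct, Pi.star_apply, Complex.re_sum, Complex.one_re] at h2
    rw [← h2]
    congr 1; ext i
    rw [Complex.sq_norm]
    simp [Complex.mul_re, Complex.normSq_apply, RCLike.star_def, Complex.conj_re, Complex.conj_im]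
    try ring
  calc qf D φ ≤ ‖star φ ⬝ᵥ D.mulVec φ‖ := Complex.re_le_norm _
    _ ≤ ∑ i, ∑ j, ‖φ i‖ * (‖D i j‖ * ‖φ j‖) := by
        refine le_trans (norm_sum_le _ _) ?_
        apply Finset.sum_le_sum; intro i _
        simp only [Pi.star_apply, Matrix.mulVec, dotProduct]
        rw [norm_mul]
        have hst : ‖star (φ i)‖ = ‖φ i‖ := by
          simp [RCLike.star_def]
        rw [hst, ← Finset.mul_sum]
        apply mul_le_mul_of_nonneg_left _ (norm_nonneg _)
        refine le_trans (norm_sum_le _ _) ?_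
        apply le_of_eq
        exact Finset.sum_congr rfl (fun j _ => norm_mul _ _)
    _ ≤ ∑ i, ∑ j, ‖D i j‖ * ((‖φ i‖ ^ 2 + ‖φ j‖ ^ 2) / 2) := by
        apply Finset.sum_le_sum; intro i _
        apply Finset.sum_le_sum; intro j _
        have h1 : ‖φ i‖ * ‖φ j‖ ≤
            (‖φ i‖ ^ 2 + ‖φ j‖ ^ 2) / 2 := by nlinarith [sq_nonneg (‖φ i‖ - ‖φ j‖)]
        calc ‖φ i‖ * (‖D i j‖ * ‖φ j‖)
            = ‖D i j‖ * (‖φ i‖ * ‖φ j‖) := by ring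
          _ ≤ _ := mul_le_mul_of_nonneg_left h1 (norm_nonneg _)
    _ = ∑ j, (∑ i, ‖D i j‖) * ‖φ j‖ ^ 2 := by
        have hswap : ∀ i j, ‖D i j‖ * ((‖φ i‖ ^ 2 + ‖φ j‖ ^ 2) / 2)
            = ‖D i j‖ * ‖φ i‖ ^ 2 / 2
              + ‖D i j‖ * ‖φ j‖ ^ 2 / 2 := by intro i j; ring
        simp_rw [hswap, Finset.sum_add_distrib]
        rw [Finset.sum_comm (f := fun i j => ‖D i j‖ * ‖φ j‖ ^ 2 / 2)]
        have : ∀ j, ∑ i, ‖D j i‖ * ‖φ j‖ ^ 2 / 2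
            = ∑ i, ‖D i j‖ * ‖φ j‖ ^ 2 / 2 := by
          intro j
          apply Finset.sum_congr rfl; intro i _
          rw [habs j i]
        calc (∑ j, ∑ i, ‖D j i‖ * ‖φ j‖ ^ 2 / 2)
              + ∑ j, ∑ i, ‖D i j‖ * ‖φ j‖ ^ 2 / 2
            = (∑ j, ∑ i, ‖D i j‖ * ‖φ j‖ ^ 2 / 2)
              + ∑ j, ∑ i, ‖D i j‖ * ‖φ j‖ ^ 2 / 2 := by
              rw [Finset.sum_congr rfl (fun j _ => this j)]
          _ = ∑ j, (∑ i, ‖D i j‖) * ‖φ j‖ ^ 2 := by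
              rw [← Finset.sum_add_distrib]
              apply Finset.sum_congr rfl; intro j _
              rw [← Finset.sum_add_distrib, Finset.sum_mul]
              apply Finset.sum_congr rfl; intro i _; ring
    _ ≤ ∑ j, Δ * ‖φ j‖ ^ 2 := by
        apply Finset.sum_le_sum; intro j _
        exact mul_le_mul_of_nonneg_right (col_sum_le hN j) (sq_nonneg _)
    _ = Δ := by rw [← Finset.mul_sum, hsq, mul_one]

lemma kron_unit {nA nB : ℕ} {a : Fin nA → ℂ} {b : Fin nB → ℂ}
    (ha : star a ⬝ᵥ a = 1) (hb : star b ⬝ᵥ b = 1) :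
    star (kron a b) ⬝ᵥ kron a b = 1 := by
  have : star (kron a b) ⬝ᵥ kron a b = (star a ⬝ᵥ a) * (star b ⬝ᵥ b) := by
    simp only [dotProduct, Pi.star_apply, kron, Fintype.sum_prod_type, Finset.sum_mul_sum,
      star_mul']
    apply Finset.sum_congr rfl; intro i _
    apply Finset.sum_congr rfl; intro j _
    ring
  rw [this, ha, hb, mul_one]

-- |qf M φ| bound for unit φ
lemma qf_abs_le {m : Type*} [Fintype m] (M : Matrix m m ℂ) {φ : m → ℂ}
    (hφ : star φ ⬝ᵥ φ = 1) : |qf M φ| ≤ ∑ p, ∑ q, ‖M p q‖ := by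
  have hxj : ∀ j, ‖φ j‖ ≤ 1 := by
    intro j
    have hsq : ∑ i, ‖φ i‖ ^ 2 = 1 := by
      have h2 := congrArg Complex.re hφ
      simp only [dotProduct, Pi.star_apply, Complex.re_sum, Complex.one_re] at h2
      rw [← h2]
      congr 1; ext i
      rw [Complex.sq_norm]
      simp [Complex.mul_re, Complex.normSq_apply, RCLike.star_def, Complex.conj_re,
        Complex.conj_im]
      try ring
    have h1 : ‖φ j‖ ^ 2 ≤ 1 := by
      rw [← hsq]
      exact Finset.single_le_sum (fun i _ => sq_nonneg (‖φ i‖)) (Finset.mem_univ j)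
    nlinarith [norm_nonneg (φ j)]
  have h := Complex.abs_re_le_norm (star φ ⬝ᵥ M.mulVec φ)
  refine le_trans h ?_
  refine le_trans (norm_sum_le _ _) ?_
  apply Finset.sum_le_sum; intro p _
  rw [Pi.star_apply, norm_mul]
  have hst : ‖star (φ p)‖ = ‖φ p‖ := by simp [RCLike.star_def]
  rw [hst]
  calc ‖φ p‖ * ‖M.mulVec φ p‖
      ≤ 1 * ‖M.mulVec φ p‖ := mul_le_mul_of_nonneg_right (hxj p) (norm_nonneg _)
    _ = ‖∑ q, M p q * φ q‖ := by rw [one_mul]; rfl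
    _ ≤ ∑ q, ‖M p q * φ q‖ := norm_sum_le _ _
    _ ≤ ∑ q, ‖M p q‖ := by
        apply Finset.sum_le_sum; intro q _
        rw [norm_mul]
        calc ‖M p q‖ * ‖φ q‖ ≤ ‖M p q‖ * 1 :=
              mul_le_mul_of_nonneg_left (hxj q) (norm_nonneg _)
          _ = _ := mul_one _

/-- The robust security strategy set of the (maximizing) victim, accounting
for Hermitian deceptions of induced 1-norm at most Δ, coincides with the naive security
strategy set for the announced Hamiltonian H'. -/
theorem stmt6 {nA nB : ℕ} (H' : Matrix (Fin nA × Fin nB) (Fin nA × Fin nB) ℂ)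
    (hH : H'.IsHermitian) (Δ : ℝ) (hΔ : 0 ≤ Δ) :
    {ψB : Fin nB → ℂ | star ψB ⬝ᵥ ψB = 1 ∧ ∀ ψB' : Fin nB → ℂ, star ψB' ⬝ᵥ ψB' = 1 →
      sInf {r : ℝ | ∃ (ψA : Fin nA → ℂ) (D : Matrix (Fin nA × Fin nB) (Fin nA × Fin nB) ℂ),
          star ψA ⬝ᵥ ψA = 1 ∧ D.IsHermitian ∧ opNorm1 D ≤ Δ ∧ r = qf (H' - D) (kron ψA ψB')} ≤
      sInf {r : ℝ | ∃ (ψA : Fin nA → ℂ) (D : Matrix (Fin nA × Fin nB) (Fin nA × Fin nB) ℂ),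
          star ψA ⬝ᵥ ψA = 1 ∧ D.IsHermitian ∧ opNorm1 D ≤ Δ ∧ r = qf (H' - D) (kron ψA ψB)}} =
    {ψB : Fin nB → ℂ | star ψB ⬝ᵥ ψB = 1 ∧ ∀ ψB' : Fin nB → ℂ, star ψB' ⬝ᵥ ψB' = 1 →
      sInf {r : ℝ | ∃ ψA : Fin nA → ℂ, star ψA ⬝ᵥ ψA = 1 ∧ r = qf H' (kron ψA ψB')} ≤
      sInf {r : ℝ | ∃ ψA : Fin nA → ℂ, star ψA ⬝ᵥ ψA = 1 ∧ r = qf H' (kron ψA ψB)}} := by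
  by_cases hA : ∃ ψA : Fin nA → ℂ, star ψA ⬝ᵥ ψA = 1
  · obtain ⟨ψA₀, hψA₀⟩ := hA
    have key : ∀ ψB : Fin nB → ℂ, star ψB ⬝ᵥ ψB = 1 →
        sInf {r : ℝ | ∃ (ψA : Fin nA → ℂ) (D : Matrix (Fin nA × Fin nB) (Fin nA × Fin nB) ℂ),
          star ψA ⬝ᵥ ψA = 1 ∧ D.IsHermitian ∧ opNorm1 D ≤ Δ ∧ r = qf (H' - D) (kron ψA ψB)} =
        sInf {r : ℝ | ∃ ψA : Fin nA → ℂ, star ψA ⬝ᵥ ψA = 1 ∧ r = qf H' (kron ψA ψB)} - Δ := by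
      intro ψB hψB
      set N : Set ℝ := {r : ℝ | ∃ ψA : Fin nA → ℂ, star ψA ⬝ᵥ ψA = 1 ∧ r = qf H' (kron ψA ψB)}
        with hNdef
      set R : Set ℝ := {r : ℝ | ∃ (ψA : Fin nA → ℂ)
          (D : Matrix (Fin nA × Fin nB) (Fin nA × Fin nB) ℂ),
          star ψA ⬝ᵥ ψA = 1 ∧ D.IsHermitian ∧ opNorm1 D ≤ Δ ∧ r = qf (H' - D) (kron ψA ψB)}
        with hRdef
      set C : ℝ := ∑ p, ∑ q, ‖H' p q‖ with hCdef
      have hqf_bound : ∀ ψA : Fin nA → ℂ, star ψA ⬝ᵥ ψA = 1 →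
          |qf H' (kron ψA ψB)| ≤ C := fun ψA hu => qf_abs_le H' (kron_unit hu hψB)
      have bddN : BddBelow N := by
        refine ⟨-C, ?_⟩
        rintro x ⟨ψA, hu, rfl⟩
        linarith [abs_le.mp (hqf_bound ψA hu) |>.1]
      have bddR : BddBelow R := by
        refine ⟨-C - Δ, ?_⟩
        rintro x ⟨ψA, D, hu, hDh, hDn, rfl⟩
        have h1 := qf_le_of_opNorm1 hDh hDn (kron_unit hu hψB)
        have h2 := abs_le.mp (hqf_bound ψA hu) |>.1
        rw [qf_sub]
        linarith
      have hmemD : ∀ ψA : Fin nA → ℂ, star ψA ⬝ᵥ ψA = 1 →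
          qf H' (kron ψA ψB) - Δ ∈ R := by
        intro ψA hu
        refine ⟨ψA, (Δ : ℂ) • (1 : Matrix (Fin nA × Fin nB) (Fin nA × Fin nB) ℂ),
          hu, herm_smul_one Δ, opNorm1_smul_one hΔ, ?_⟩
        rw [qf_sub, qf_smul_one Δ (kron_unit hu hψB)]
      have neN : N.Nonempty := ⟨_, ψA₀, hψA₀, rfl⟩
      have neR : R.Nonempty := ⟨_, hmemD ψA₀ hψA₀⟩
      apply le_antisymm
      · have h1 : sInf R + Δ ≤ sInf N := by
          apply le_csInf neN
          rintro x ⟨ψA, hu, rfl⟩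
          have := csInf_le bddR (hmemD ψA hu)
          linarith
        linarith
      · apply le_csInf neR
        rintro r ⟨ψA, D, hu, hDh, hDn, rfl⟩
        have h1 := qf_le_of_opNorm1 hDh hDn (kron_unit hu hψB)
        have h2 : sInf N ≤ qf H' (kron ψA ψB) := csInf_le bddN ⟨ψA, hu, rfl⟩
        rw [qf_sub]
        linarith
    ext ψB
    simp only [Set.mem_setOf_eq]
    constructor
    · rintro ⟨h1, h2⟩
      refine ⟨h1, fun ψB' h' => ?_⟩
      have := h2 ψB' h'
      rw [key ψB' h', key ψB h1] at this
      linarith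
    · rintro ⟨h1, h2⟩
      refine ⟨h1, fun ψB' h' => ?_⟩
      have := h2 ψB' h'
      rw [key ψB' h', key ψB h1]
      linarith
  · have he1 : ∀ ψB : Fin nB → ℂ,
        {r : ℝ | ∃ (ψA : Fin nA → ℂ) (D : Matrix (Fin nA × Fin nB) (Fin nA × Fin nB) ℂ),
          star ψA ⬝ᵥ ψA = 1 ∧ D.IsHermitian ∧ opNorm1 D ≤ Δ ∧ r = qf (H' - D) (kron ψA ψB)}
          = (∅ : Set ℝ) := by
      intro ψB
      ext r
      simp only [Set.mem_setOf_eq, Set.mem_empty_iff_false, iff_false, not_exists]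
      intro ψA D h
      exact hA ⟨ψA, h.1⟩
    have he2 : ∀ ψB : Fin nB → ℂ,
        {r : ℝ | ∃ ψA : Fin nA → ℂ, star ψA ⬝ᵥ ψA = 1 ∧ r = qf H' (kron ψA ψB)}
          = (∅ : Set ℝ) := by
      intro ψB
      ext r
      simp only [Set.mem_setOf_eq, Set.mem_empty_iff_false, iff_false, not_exists]
      intro ψA h
      exact hA ⟨ψA, h.1⟩
    ext ψB
    simp only [Set.mem_setOf_eq, he1, he2]
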